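/- With 𝓕_m the multiplicative function defined by 𝓕_m(p^ν) = f_{m-1}(ν) − f_{m-1}(ν−1) (where f_k(n) = 1 iff H(n) ≤ k), the density of integers n with H(n) ≥ k, for k ≥ 2, equals D_k = −∑_{d > 1} 𝓕_{k−1}(d)/d, and the series converges absolutely. -/

import Mathlib

/-- Tetration base 2: `tet 0 = 1`, `tet (m+1) = 2 ^ tet m`. -/
def tet : ℕ → ℕ
  | 0 => 1
  | m + 1 => 2 ^ tet m

/-- Height of the super-factorization tree of `n`:
`H 1 = 0` and `H n = 1 + max_{p^α ∥ n} H α` for `n > 1`. -/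
def H : ℕ → ℕ
  | n =>
    if h : n ≤ 1 then 0
    else 1 + (n.primeFactors.attach.sup fun p => H (n.factorization p.1))
decreasing_by
  exact Nat.factorization_lt _ (by omega)

/-- `f m n` = 1 if `H n ≤ m`, else 0. -/
def f (m n : ℕ) : ℤ := if H n ≤ m then 1 else 0

/-- `F m n = ∏_{p^α ∥ n} (f (m-1) α - f (m-1) (α-1))`. -/
def F (m n : ℕ) : ℤ :=
  ∏ p ∈ n.primeFactors, (f (m - 1) (n.factorization p) - f (m - 1) (n.factorization p - 1))

/-! Since `H n ≤ m + 1` iff every exponent `ν` of `n` has `H ν ≤ m`, the indicator `f (m + 1)` is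
multiplicative with value `f m ν` at `p ^ ν`; its Möbius-type inverse is exactly `F (m + 1)`, i.e.
`∑_{d ∣ n} F (m + 1) d = f (m + 1) n`. Summing over `n ≤ x` gives
`#{n ≤ x | H n ≤ m + 1} = ∑_{d ≤ x} F (m + 1) d * ⌊x / d⌋`. Now `|F| ≤ 1` and `F d = 0` unless `d`
is powerful, i.e. of the form `a² b³`, so `∑ |F d| / d < ∞` and dominated convergence gives the
density `1 - ∑_d F (m + 1) d / d`, where the term `d = 1` equals `1`. -/

open Finset Filter Topology ArithmeticFunction
open scoped ArithmeticFunction.zeta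

lemma H_of_le_one {n : ℕ} (h : n ≤ 1) : H n = 0 := by
  rw [H]; simp [h]

lemma H_of_one_lt {n : ℕ} (h : 1 < n) :
    H n = 1 + (n.primeFactors.attach.sup fun p => H (n.factorization p.1)) := by
  rw [H]; simp [Nat.not_le.mpr h]

lemma f_of_le_one (m : ℕ) {n : ℕ} (h : n ≤ 1) : f m n = 1 := by
  simp [f, H_of_le_one h]

lemma f_succ_eq_prod (m n : ℕ) :
    f (m + 1) n = ∏ p ∈ n.primeFactors, f m (n.factorization p) := by
  rcases le_or_gt n 1 with hn | hn
  · rw [f_of_le_one _ hn, Nat.primeFactors_eq_empty.2 (by omega), prod_empty]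
  · simp only [f]
    rw [prod_boole, H_of_one_lt hn]
    refine if_congr ?_ rfl rfl
    rw [add_comm 1, Nat.add_le_add_iff_right, Finset.sup_le_iff]
    simp

lemma F_eq_factorization_prod (m n : ℕ) :
    F m n = n.factorization.prod fun _ ν => f (m - 1) ν - f (m - 1) (ν - 1) := by
  rw [Finsupp.prod, Nat.support_factorization]; rfl

lemma F_one (m : ℕ) : F m 1 = 1 := by
  simp [F]

lemma F_prime_pow (m : ℕ) {p ν : ℕ} (hp : p.Prime) (hν : ν ≠ 0) :
    F m (p ^ ν) = f (m - 1) ν - f (m - 1) (ν - 1) := by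
  rw [F, Nat.primeFactors_prime_pow hν hp, prod_singleton, hp.factorization_pow,
    Finsupp.single_eq_same]

lemma F_mul_of_coprime (m : ℕ) {a b : ℕ} (h : a.Coprime b) : F m (a * b) = F m a * F m b := by
  rw [F_eq_factorization_prod, Nat.factorization_mul_of_coprime h,
    Finsupp.prod_add_index_of_disjoint (by simpa using h.disjoint_primeFactors)]
  rfl

-- `F m 0 = 1` is an empty product; an arithmetic function must vanish at `0`.
noncomputable def FArith (m : ℕ) : ArithmeticFunction ℤ :=
  ⟨fun n => if n = 0 then 0 else F m n, if_pos rfl⟩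

lemma FArith_apply (m : ℕ) {n : ℕ} (hn : n ≠ 0) : FArith m n = F m n :=
  if_neg hn

lemma isMultiplicative_FArith (m : ℕ) : (FArith m).IsMultiplicative := by
  refine IsMultiplicative.iff_ne_zero.2 ⟨by simp [FArith_apply, F_one], fun ha hb h => ?_⟩
  rw [FArith_apply _ (mul_ne_zero ha hb), FArith_apply _ ha, FArith_apply _ hb,
    F_mul_of_coprime _ h]

lemma FArith_mul_zeta_apply_prime_pow (m : ℕ) {p : ℕ} (hp : p.Prime) (ν : ℕ) :
    (FArith (m + 1) * ζ) (p ^ ν) = f m ν := by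
  rw [coe_mul_zeta_apply, Nat.sum_divisors_prime_pow hp, sum_range_succ', pow_zero,
    FArith_apply _ one_ne_zero, F_one]
  have hterm : ∀ i ∈ range ν, FArith (m + 1) (p ^ (i + 1)) = f m (i + 1) - f m i := fun i _ => by
    rw [FArith_apply _ (pow_ne_zero _ hp.ne_zero), F_prime_pow _ hp i.succ_ne_zero]
    rfl
  rw [sum_congr rfl hterm, sum_range_sub, f_of_le_one m zero_le_one]
  ring

lemma FArith_mul_zeta_apply (m : ℕ) {n : ℕ} (hn : n ≠ 0) :
    (FArith (m + 1) * ζ) n = f (m + 1) n := by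
  rw [((isMultiplicative_FArith _).mul isMultiplicative_zeta.natCast).multiplicative_factorization
    _ hn, f_succ_eq_prod, Finsupp.prod, Nat.support_factorization]
  exact prod_congr rfl fun p hp =>
    FArith_mul_zeta_apply_prime_pow m (Nat.prime_of_mem_primeFactors hp) _

lemma card_filter_le_H_eq (m x : ℕ) :
    (#{n ∈ Icc 1 x | m + 2 ≤ H n} : ℤ) = x - ∑ d ∈ Ioc 0 x, F (m + 1) d * (x / d : ℕ) := by
  have hsum : ∑ n ∈ Ioc 0 x, f (m + 1) n = ∑ d ∈ Ioc 0 x, F (m + 1) d * (x / d : ℕ) := by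
    rw [← sum_congr rfl fun n hn => FArith_mul_zeta_apply m (mem_Ioc.1 hn).1.ne',
      sum_Ioc_mul_zeta_eq_sum]
    exact sum_congr rfl fun d hd => by rw [FArith_apply _ (mem_Ioc.1 hd).1.ne']
  have hindicator : ∀ n, (if m + 2 ≤ H n then 1 else 0 : ℤ) = 1 - f (m + 1) n := fun n => by
    unfold f; split_ifs <;> omega
  rw [← hsum, ← Icc_add_one_left_eq_Ioc, natCast_card_filter,
    sum_congr rfl fun n _ => hindicator n, sum_sub_distrib]
  simp

lemma tendsto_natDiv_div (d : ℕ) :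
    Tendsto (fun x : ℕ => ((x / d : ℕ) : ℝ) / x) atTop (𝓝 (d : ℝ)⁻¹) :=
  ((tendsto_nat_floor_mul_div_atTop (inv_nonneg.2 d.cast_nonneg)).comp
    tendsto_natCast_atTop_atTop).congr fun x => by
      simp [inv_mul_eq_div, Nat.floor_div_eq_div]

lemma natDiv_div_le (x d : ℕ) : ((x / d : ℕ) : ℝ) / x ≤ (d : ℝ)⁻¹ := by
  rcases eq_or_ne x 0 with rfl | hx
  · simp
  calc ((x / d : ℕ) : ℝ) / x ≤ (x / d : ℝ) / x := by gcongr; exact Nat.cast_div_le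
    _ = (d : ℝ)⁻¹ := by field_simp

lemma tendsto_sum_mul_natDiv_div {a : ℕ → ℝ} (ha : Summable fun d => |a d / d|) :
    Tendsto (fun x : ℕ => (∑ d ∈ Ioc 0 x, a d * (x / d : ℕ)) / x) atTop (𝓝 (∑' d, a d / d)) := by
  have htsum : ∀ x : ℕ, (∑ d ∈ Ioc 0 x, a d * (x / d : ℕ)) / x =
      ∑' d, a d * (((x / d : ℕ) : ℝ) / x) := fun x => by
    rw [tsum_eq_sum (s := Ioc 0 x), sum_div]
    · simp only [mul_div_assoc]
    · intro d hd
      rcases Nat.eq_zero_or_pos d with rfl | hd0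
      · simp
      · rw [Nat.div_eq_of_lt (by simpa [hd0] using hd)]; simp
  simp_rw [htsum, div_eq_mul_inv (a _)]
  refine tendsto_tsum_of_dominated_convergence ha (fun d => (tendsto_natDiv_div d).const_mul _)
    (Eventually.of_forall fun x d => ?_)
  rw [norm_mul, Real.norm_of_nonneg (by positivity : (0 : ℝ) ≤ (x / d : ℕ) / x),
    Real.norm_eq_abs, abs_div, Nat.abs_cast, div_eq_mul_inv |a d|]
  exact mul_le_mul_of_nonneg_left (natDiv_div_le x d) (abs_nonneg _)

lemma tsum_eq_add_tsum_one_lt {α : Type*} [NormedAddCommGroup α] [CompleteSpace α] {g : ℕ → α}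
    (hg : Summable g) (h0 : g 0 = 0) :
    ∑' d, g d = g 1 + ∑' d : {d : ℕ // 1 < d}, g d := by
  rw [← hg.tsum_subtype_add_tsum_subtype_compl {d | 1 < d}, add_comm, _root_.tsum_subtype,
    tsum_eq_single 1]
  · simp only [Set.indicator_of_mem (show (1 : ℕ) ∈ {d | 1 < d}ᶜ by simp)]
    rfl
  · intro d hd
    rcases Nat.lt_or_gt_of_ne hd with h | h
    · simp [Nat.lt_one_iff.1 h, h0]
    · simp [h]

-- vacuously contains `0`
def powerful : Set ℕ := {d | ∀ p ∈ d.primeFactors, 2 ≤ d.factorization p}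

lemma exists_sq_mul_cube_eq {d : ℕ} (hd : d ∈ powerful) : ∃ a b : ℕ, a ^ 2 * b ^ 3 = d := by
  rcases eq_or_ne d 0 with rfl | hd0
  · exact ⟨0, 0, rfl⟩
  -- each exponent `ν ≥ 2` splits as `2 * ((ν - 3 * (ν % 2)) / 2) + 3 * (ν % 2)`
  refine ⟨∏ p ∈ d.primeFactors, p ^ ((d.factorization p - 3 * (d.factorization p % 2)) / 2),
    ∏ p ∈ d.primeFactors, p ^ (d.factorization p % 2), ?_⟩
  rw [← prod_pow, ← prod_pow, ← prod_mul_distrib]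
  conv_rhs =>
    rw [← Nat.prod_factorization_pow_eq_self hd0, Finsupp.prod, Nat.support_factorization]
  refine prod_congr rfl fun p hp => ?_
  rw [← pow_mul, ← pow_mul, ← pow_add]
  have := hd p hp
  congr 1
  omega

lemma summable_inv_powerful : Summable fun d : powerful => ((d : ℕ) : ℝ)⁻¹ := by
  choose a b hab using fun d : powerful => exists_sq_mul_cube_eq d.2
  have hinj : Function.Injective fun d => (a d, b d) := fun d e hde => by
    simp only [Prod.mk.injEq] at hde
    exact Subtype.ext (by rw [← hab d, ← hab e, hde.1, hde.2])
  have hsummable : Summable fun q : ℕ × ℕ => ((q.1 : ℝ) ^ 2)⁻¹ * ((q.2 : ℝ) ^ 3)⁻¹ :=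
    (Real.summable_nat_pow_inv.2 one_lt_two).mul_of_nonneg
      (Real.summable_nat_pow_inv.2 (by norm_num)) (fun _ => by positivity) fun _ => by positivity
  refine (hsummable.comp_injective hinj).congr fun d => ?_
  simp [← hab d, mul_comm]

lemma abs_F_le_one (m d : ℕ) : |F m d| ≤ 1 := by
  rw [F, abs_prod]
  refine prod_le_one (fun _ _ => abs_nonneg _) fun p _ => ?_
  unfold f
  split_ifs <;> simp

lemma mem_powerful_of_F_ne_zero {m d : ℕ} (h : F m d ≠ 0) : d ∈ powerful := by
  intro p hp
  by_contra hlt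
  have hone : d.factorization p = 1 := by
    have := Nat.pos_of_ne_zero (Finsupp.mem_support_iff.1 (Nat.support_factorization d ▸ hp))
    omega
  exact h (prod_eq_zero hp (by simp [hone, f_of_le_one]))

lemma summable_abs_F_div (m : ℕ) : Summable fun d : ℕ => |(F m d : ℝ) / d| := by
  refine (Subtype.coe_injective.summable_iff fun d hd => ?_).1 <|
    summable_inv_powerful.of_nonneg_of_le (fun _ => abs_nonneg _) fun d => ?_
  · have : F m d = 0 := by_contra fun h => hd (by simpa using mem_powerful_of_F_ne_zero h)
    simp [this]
  · rw [Function.comp_apply, abs_div, Nat.abs_cast, div_eq_mul_inv]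
    exact mul_le_of_le_one_left (by positivity) (by exact_mod_cast abs_F_le_one m d)

theorem stmt14 (k : ℕ) (hk : 2 ≤ k) :
    Summable (fun d : {d : ℕ // 1 < d} => |(F (k - 1) (d : ℕ) : ℝ) / ((d : ℕ) : ℝ)|) ∧
      Filter.Tendsto
        (fun x : ℕ => (((Finset.Icc 1 x).filter fun n => k ≤ H n).card : ℝ) / x)
        Filter.atTop
        (nhds (-∑' d : {d : ℕ // 1 < d}, (F (k - 1) (d : ℕ) : ℝ) / ((d : ℕ) : ℝ))) := by
  obtain ⟨m, rfl⟩ : ∃ m, k = m + 2 := ⟨k - 2, by omega⟩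
  rw [show m + 2 - 1 = m + 1 by omega]
  have hsummable := summable_abs_F_div (m + 1)
  refine ⟨hsummable.subtype {d | 1 < d}, ?_⟩
  have hcount : ∀ᶠ x : ℕ in atTop, (#{n ∈ Icc 1 x | m + 2 ≤ H n} : ℝ) / x =
      1 - (∑ d ∈ Ioc 0 x, (F (m + 1) d : ℝ) * (x / d : ℕ)) / x := by
    filter_upwards [eventually_ne_atTop 0] with x hx
    have hcast := congrArg (Int.cast : ℤ → ℝ) (card_filter_le_H_eq m x)
    simp only [Int.cast_sub, Int.cast_sum, Int.cast_mul, Int.cast_natCast] at hcast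
    rw [hcast, sub_div, div_self (Nat.cast_ne_zero.2 hx)]
  have hsplit := tsum_eq_add_tsum_one_lt hsummable.of_abs (by simp)
  rw [Nat.cast_one, F_one, Int.cast_one, div_one] at hsplit
  refine (tendsto_congr' hcount).2 ?_
  convert (tendsto_sum_mul_natDiv_div hsummable).const_sub 1 using 2
  rw [hsplit]
  ring
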